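/- arXiv:2404.17947 — 3 statements merged into one kernel-verified Lean document; each statement's English description precedes it below -/
import Mathlib

section
/- Consider an L-layer GCN as below, where Ã ∈ ℝ^{n×n} has nonnegative entries. Let X, X' ∈ ℝ^{n×K} be two feature matrices such that ‖X_v − X'_v‖_∞ ≤ ε for every row (node) v. Then for every node u, the rows of the outputs satisfy ‖F_Ã(X)_u − F_Ã(X')_u‖_∞ ≤ (∏_{ℓ=1}^{L} ‖W^{(ℓ)}‖_∞) · ε · ŵ_u. -/
open scoped BigOperators

/-- An `L`-layer GCN: `H⁽⁰⁾ = X` and `H⁽ˡ⁺¹⁾ = φ⁽ˡ⁺¹⁾(Ã H⁽ˡ⁾ W⁽ˡ⁺¹⁾)`, with the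
activation applied entrywise.  `d ℓ` is the embedding dimension at layer `ℓ` and the
weight matrix of layer `ℓ+1` is `W ℓ : ℝ^{d ℓ × d (ℓ+1)}`. -/
noncomputable def gcn {n : ℕ} (d : ℕ → ℕ) (φ : ℕ → ℝ → ℝ)
    (A : Matrix (Fin n) (Fin n) ℝ)
    (W : (ℓ : ℕ) → Matrix (Fin (d ℓ)) (Fin (d (ℓ + 1))) ℝ)
    (X : Matrix (Fin n) (Fin (d 0)) ℝ) : (ℓ : ℕ) → Matrix (Fin n) (Fin (d ℓ)) ℝ
  | 0 => X
  | (ℓ + 1) => (A * gcn d φ A W X ℓ * W ℓ).map (φ (ℓ + 1))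

/-- The operator norm of the map `h ↦ hW` on row vectors with respect to the `ℓ∞`
norm: the maximum absolute column sum of `W`. -/
noncomputable def opNormInf {m e : ℕ} (W : Matrix (Fin m) (Fin e) ℝ) : ℝ :=
  ⨆ j : Fin e, ∑ i : Fin m, |W i j|

/-! Each layer is row-wise Lipschitz in the `ℓ∞` norm: the activation does not increase
distances, right multiplication by `W` scales them by at most `‖W‖_∞`, and left
multiplication by the nonnegative `Ã` bounds the distance of row `u` by the `Ã_{u v}`-weighted
sum of the distances of the rows `v`. Iterating over the layers, these weights compose into
the row sums of `Ã^L`. -/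

open Finset Matrix

section OpNormInf

variable {m e : ℕ}

lemma sum_abs_le_opNormInf (W : Matrix (Fin m) (Fin e) ℝ) (j : Fin e) :
    ∑ i, |W i j| ≤ opNormInf W :=
  le_ciSup (f := fun j => ∑ i, |W i j|) (Set.finite_range _).bddAbove j

lemma opNormInf_nonneg (W : Matrix (Fin m) (Fin e) ℝ) : 0 ≤ opNormInf W :=
  Real.iSup_nonneg fun _ => sum_nonneg fun _ _ => abs_nonneg _

lemma norm_vecMul_le_opNormInf_mul (x : Fin m → ℝ) (W : Matrix (Fin m) (Fin e) ℝ) :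
    ‖x ᵥ* W‖ ≤ opNormInf W * ‖x‖ := by
  refine (pi_norm_le_iff_of_nonneg (mul_nonneg (opNormInf_nonneg W) (norm_nonneg x))).2
    fun j => ?_
  calc ‖(x ᵥ* W) j‖ = |∑ i, x i * W i j| := rfl
    _ ≤ ∑ i, |x i| * |W i j| := (abs_sum_le_sum_abs _ _).trans_eq (by simp only [abs_mul])
    _ ≤ ∑ i, ‖x‖ * |W i j| := by gcongr with i; exact norm_le_pi_norm x i
    _ = ‖x‖ * ∑ i, |W i j| := (mul_sum _ _ _).symm
    _ ≤ ‖x‖ * opNormInf W := by gcongr; exact sum_abs_le_opNormInf W j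
    _ = opNormInf W * ‖x‖ := mul_comm _ _

end OpNormInf

lemma norm_mul_apply_sub_mul_apply_le {μ ι κ : Type*} [Fintype ι] [Fintype κ]
    (A : Matrix μ ι ℝ) (u : μ) (hA : ∀ v, 0 ≤ A u v) (G G' : Matrix ι κ ℝ) :
    ‖(A * G) u - (A * G') u‖ ≤ ∑ v, A u v * ‖G v - G' v‖ := by
  calc ‖(A * G) u - (A * G') u‖ = ‖∑ v, A u v • (G v - G' v)‖ := by
        simp only [mul_apply_eq_vecMul, vecMul_eq_sum, smul_sub, sum_sub_distrib]
    _ ≤ ∑ v, ‖A u v • (G v - G' v)‖ := norm_sum_le _ _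
    _ = ∑ v, A u v * ‖G v - G' v‖ := by
        simp only [norm_smul, Real.norm_of_nonneg (hA _)]

lemma norm_comp_sub_comp_le {κ : Type*} [Fintype κ] {φ : ℝ → ℝ} (hφ : LipschitzWith 1 φ)
    (x y : κ → ℝ) : ‖φ ∘ x - φ ∘ y‖ ≤ ‖x - y‖ :=
  (pi_norm_le_iff_of_nonneg (norm_nonneg _)).2 fun k =>
    calc ‖(φ ∘ x - φ ∘ y) k‖ = dist (φ (x k)) (φ (y k)) := (dist_eq_norm _ _).symm
      _ ≤ dist (x k) (y k) := by simpa using hφ.dist_le_mul (x k) (y k)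
      _ ≤ ‖x - y‖ := (dist_eq_norm _ _).trans_le (norm_le_pi_norm (x - y) k)

lemma sum_mul_apply {μ ι κ R : Type*} [Fintype ι] [Fintype κ] [NonUnitalNonAssocSemiring R]
    (A : Matrix μ ι R) (B : Matrix ι κ R) (u : μ) :
    ∑ w, (A * B) u w = ∑ v, A u v * ∑ w, B v w := by
  simp only [mul_apply, mul_sum]
  exact sum_comm

lemma norm_gcn_succ_sub_le {n : ℕ} (d : ℕ → ℕ) (φ : ℕ → ℝ → ℝ) (A : Matrix (Fin n) (Fin n) ℝ)
    (hA : ∀ i j, 0 ≤ A i j) (W : (ℓ : ℕ) → Matrix (Fin (d ℓ)) (Fin (d (ℓ + 1))) ℝ)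
    (ℓ : ℕ) (hφ : LipschitzWith 1 (φ (ℓ + 1))) (X X' : Matrix (Fin n) (Fin (d 0)) ℝ) (u : Fin n) :
    ‖gcn d φ A W X (ℓ + 1) u - gcn d φ A W X' (ℓ + 1) u‖ ≤
      opNormInf (W ℓ) * ∑ v, A u v * ‖gcn d φ A W X ℓ v - gcn d φ A W X' ℓ v‖ :=
  calc ‖gcn d φ A W X (ℓ + 1) u - gcn d φ A W X' (ℓ + 1) u‖
      ≤ ‖(A * gcn d φ A W X ℓ) u ᵥ* W ℓ - (A * gcn d φ A W X' ℓ) u ᵥ* W ℓ‖ :=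
        norm_comp_sub_comp_le hφ _ _
    _ ≤ opNormInf (W ℓ) * ‖(A * gcn d φ A W X ℓ) u - (A * gcn d φ A W X' ℓ) u‖ := by
        rw [← sub_vecMul]; exact norm_vecMul_le_opNormInf_mul _ _
    _ ≤ _ := by
        gcongr
        · exact opNormInf_nonneg _
        · exact norm_mul_apply_sub_mul_apply_le A u (hA u) _ _

/-- Theorem 1 (ℓ∞ Lipschitz core, feature attacks on GCNs): if every row of the feature
perturbation has `ℓ∞` norm at most `ε`, then every row `u` of the output of an `L`-layer
GCN moves in `ℓ∞` norm by at most `(∏ ℓ, ‖W⁽ˡ⁾‖_∞) · ε · ŵ_u`, where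
`ŵ_u = ∑ v, (Ã^L)_{u v}` is the `u`-th row sum of `Ã^L`. -/
theorem gcn_feature_attack_linf_bound
    {n : ℕ} (L : ℕ) (d : ℕ → ℕ) (φ : ℕ → ℝ → ℝ)
    (A : Matrix (Fin n) (Fin n) ℝ) (hA : ∀ i j, 0 ≤ A i j)
    (W : (ℓ : ℕ) → Matrix (Fin (d ℓ)) (Fin (d (ℓ + 1))) ℝ)
    (hφ : ∀ ℓ, LipschitzWith 1 (φ ℓ))
    (X X' : Matrix (Fin n) (Fin (d 0)) ℝ) (ε : ℝ)
    (hX : ∀ v : Fin n, ‖X v - X' v‖ ≤ ε) :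
    ∀ u : Fin n,
      ‖gcn d φ A W X L u - gcn d φ A W X' L u‖ ≤
        (∏ ℓ ∈ Finset.range L, opNormInf (W ℓ)) * ε * (∑ v : Fin n, (A ^ L) u v) := by
  induction L with
  | zero =>
    intro u
    simpa [gcn, one_apply] using hX u
  | succ L ih =>
    intro u
    calc ‖gcn d φ A W X (L + 1) u - gcn d φ A W X' (L + 1) u‖
        ≤ opNormInf (W L) * ∑ v, A u v * ‖gcn d φ A W X L v - gcn d φ A W X' L v‖ :=
          norm_gcn_succ_sub_le d φ A hA W L (hφ _) X X' u
      _ ≤ opNormInf (W L) * ∑ v, A u v *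
            ((∏ ℓ ∈ range L, opNormInf (W ℓ)) * ε * ∑ w, (A ^ L) v w) := by
          gcongr with v
          · exact opNormInf_nonneg _
          · exact hA u v
          · exact ih v
      _ = (∏ ℓ ∈ range (L + 1), opNormInf (W ℓ)) * ε * ∑ w, (A ^ (L + 1)) u w := by
          rw [prod_range_succ, pow_succ', sum_mul_apply, mul_sum, mul_sum]
          exact sum_congr rfl fun v _ => by ring
end

section
/- Consider an L-layer GCN as below, where Ã ∈ ℝ^{n×n} is symmetric with nonnegative entries. Let X, X' ∈ ℝ^{n×K} be two feature matrices such that ‖X_v − X'_v‖₁ ≤ ε for every row (node) v. Then the total ℓ¹ deviation of the outputs satisfies Σ_u ‖F_Ã(X)_u − F_Ã(X')_u‖₁ ≤ (∏_{ℓ=1}^{L} ‖W^{(ℓ)}‖₁) · ε · Σ_u ŵ_u. -/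
/-!
Write `δ^ℓ_v` for the `ℓ¹` distance between the layer-`ℓ` features of node `v` under `X` and `X'`.
Since the activations are 1-Lipschitz and `Ã` is entrywise nonnegative, one layer gives
`δ^(ℓ+1) ≤ ‖W^(ℓ+1)‖₁ · Ã δ^ℓ` entrywise, and `Ã` preserves entrywise inequalities. Iterating,
`δ^L ≤ (∏ ‖W‖₁) · Ã^L δ^0 ≤ (∏ ‖W‖₁) · ε · Ã^L 𝟙`, whose sum over the nodes is the bound.
-/

open scoped BigOperators

/-- The `ℓ¹` norm of a row vector. -/
noncomputable def l1Norm {m : ℕ} (v : Fin m → ℝ) : ℝ := ∑ j : Fin m, |v j|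

/-- The operator norm of the map `h ↦ hW` on row vectors with respect to the `ℓ¹`
norm: the maximum absolute row sum of `W`. -/
noncomputable def opNormOne {m e : ℕ} (W : Matrix (Fin m) (Fin e) ℝ) : ℝ :=
  ⨆ i : Fin m, ∑ j : Fin e, |W i j|

open Matrix

lemma opNormOne_nonneg {m e : ℕ} (W : Matrix (Fin m) (Fin e) ℝ) : 0 ≤ opNormOne W :=
  Real.iSup_nonneg fun _ => Finset.sum_nonneg fun _ _ => abs_nonneg _

lemma l1Norm_row_le_opNormOne {m e : ℕ} (W : Matrix (Fin m) (Fin e) ℝ) (k : Fin m) :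
    l1Norm (W k) ≤ opNormOne W :=
  le_ciSup (f := fun i => ∑ j, |W i j|) (Set.finite_range _).bddAbove k

lemma l1Norm_comp_sub_comp_le {m : ℕ} {f : ℝ → ℝ} (hf : LipschitzWith 1 f) (x y : Fin m → ℝ) :
    l1Norm (f ∘ x - f ∘ y) ≤ l1Norm (x - y) :=
  Finset.sum_le_sum fun j _ => by
    simpa [Real.dist_eq] using hf.dist_le_mul (x j) (y j)

lemma l1Norm_vecMul_le_sum {m e : ℕ} (x : Fin m → ℝ) (M : Matrix (Fin m) (Fin e) ℝ) :
    l1Norm (x ᵥ* M) ≤ ∑ k, |x k| * l1Norm (M k) :=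
  calc ∑ j, |∑ k, x k * M k j|
      ≤ ∑ j, ∑ k, |x k| * |M k j| :=
        Finset.sum_le_sum fun j _ => (Finset.abs_sum_le_sum_abs _ _).trans_eq (by simp [abs_mul])
    _ = ∑ k, |x k| * l1Norm (M k) := by
        rw [Finset.sum_comm]
        simp only [l1Norm, Finset.mul_sum]

lemma l1Norm_vecMul_le {m e : ℕ} (x : Fin m → ℝ) (M : Matrix (Fin m) (Fin e) ℝ) :
    l1Norm (x ᵥ* M) ≤ opNormOne M * l1Norm x :=
  calc l1Norm (x ᵥ* M) ≤ ∑ k, |x k| * l1Norm (M k) := l1Norm_vecMul_le_sum x M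
    _ ≤ ∑ k, |x k| * opNormOne M := by
        gcongr with k
        exact l1Norm_row_le_opNormOne M k
    _ = opNormOne M * l1Norm x := by rw [← Finset.sum_mul, mul_comm, l1Norm]

theorem Matrix.mulVec_le_mulVec_of_nonneg {R : Type*} [Semiring R] [PartialOrder R]
    [IsOrderedRing R] {m n : Type*} [Fintype n] {A : Matrix m n R} (hA : ∀ i j, 0 ≤ A i j)
    {x y : n → R} (hxy : x ≤ y) : A *ᵥ x ≤ A *ᵥ y :=
  fun i => dotProduct_le_dotProduct_of_nonneg_left hxy (hA i)

noncomputable def rowL1Dist {n m : ℕ} (H H' : Matrix (Fin n) (Fin m) ℝ) : Fin n → ℝ :=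
  fun v => l1Norm (H v - H' v)

lemma rowL1Dist_layer_le {n m e : ℕ} {A : Matrix (Fin n) (Fin n) ℝ} (hA : ∀ i j, 0 ≤ A i j)
    {φ : ℝ → ℝ} (hφ : LipschitzWith 1 φ) (H H' : Matrix (Fin n) (Fin m) ℝ)
    (W : Matrix (Fin m) (Fin e) ℝ) :
    rowL1Dist ((A * H * W).map φ) ((A * H' * W).map φ) ≤
      opNormOne W • (A *ᵥ rowL1Dist H H') := fun u =>
  calc l1Norm (φ ∘ (A * H * W) u - φ ∘ (A * H' * W) u)
      ≤ l1Norm ((A * H * W) u - (A * H' * W) u) := l1Norm_comp_sub_comp_le hφ _ _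
    _ = l1Norm (A u ᵥ* (H - H') ᵥ* W) := by
        simp only [mul_apply_eq_vecMul, vecMul_sub, sub_vecMul]
    _ ≤ opNormOne W * l1Norm (A u ᵥ* (H - H')) := l1Norm_vecMul_le _ W
    _ ≤ opNormOne W * ∑ v, |A u v| * l1Norm (H v - H' v) :=
        mul_le_mul_of_nonneg_left (l1Norm_vecMul_le_sum _ _) (opNormOne_nonneg W)
    _ = opNormOne W * (A *ᵥ rowL1Dist H H') u := by
        simp only [abs_of_nonneg (hA u _)]
        rfl

lemma rowL1Dist_gcn_le {n : ℕ} {d : ℕ → ℕ} {φ : ℕ → ℝ → ℝ}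
    {A : Matrix (Fin n) (Fin n) ℝ} (hA : ∀ i j, 0 ≤ A i j)
    (W : (ℓ : ℕ) → Matrix (Fin (d ℓ)) (Fin (d (ℓ + 1))) ℝ) (hφ : ∀ ℓ, LipschitzWith 1 (φ ℓ))
    {X X' : Matrix (Fin n) (Fin (d 0)) ℝ} {y : Fin n → ℝ} (hXy : rowL1Dist X X' ≤ y) :
    ∀ L, rowL1Dist (gcn d φ A W X L) (gcn d φ A W X' L) ≤
      (∏ ℓ ∈ Finset.range L, opNormOne (W ℓ)) • (A ^ L *ᵥ y)
  | 0 => by simpa [gcn] using hXy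
  | L + 1 => by
    have ih := rowL1Dist_gcn_le hA W hφ hXy L
    calc rowL1Dist (gcn d φ A W X (L + 1)) (gcn d φ A W X' (L + 1))
        ≤ opNormOne (W L) • (A *ᵥ rowL1Dist (gcn d φ A W X L) (gcn d φ A W X' L)) :=
          rowL1Dist_layer_le hA (hφ (L + 1)) _ _ (W L)
      _ ≤ opNormOne (W L) • (A *ᵥ ((∏ ℓ ∈ Finset.range L, opNormOne (W ℓ)) • (A ^ L *ᵥ y))) :=
          smul_le_smul_of_nonneg_left (mulVec_le_mulVec_of_nonneg hA ih)
            (opNormOne_nonneg _)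
      _ = (∏ ℓ ∈ Finset.range (L + 1), opNormOne (W ℓ)) • (A ^ (L + 1) *ᵥ y) := by
          rw [mulVec_smul, mulVec_mulVec, ← pow_succ', smul_smul,
            Finset.prod_range_succ, mul_comm]

theorem gcn_feature_attack_l1_bound_general
    {n : ℕ} (L : ℕ) (d : ℕ → ℕ) (φ : ℕ → ℝ → ℝ)
    (A : Matrix (Fin n) (Fin n) ℝ) (hA : ∀ i j, 0 ≤ A i j)
    (W : (ℓ : ℕ) → Matrix (Fin (d ℓ)) (Fin (d (ℓ + 1))) ℝ)
    (hφ : ∀ ℓ, LipschitzWith 1 (φ ℓ))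
    (X X' : Matrix (Fin n) (Fin (d 0)) ℝ) (ε : ℝ)
    (hX : ∀ v : Fin n, l1Norm (X v - X' v) ≤ ε) :
    ∑ u : Fin n, l1Norm (gcn d φ A W X L u - gcn d φ A W X' L u) ≤
      (∏ ℓ ∈ Finset.range L, opNormOne (W ℓ)) * ε *
        (∑ u : Fin n, ∑ v : Fin n, (A ^ L) u v) := by
  have hrows := rowL1Dist_gcn_le hA W hφ (y := fun _ => ε) hX L
  calc ∑ u, rowL1Dist (gcn d φ A W X L) (gcn d φ A W X' L) u
      ≤ ∑ u, (∏ ℓ ∈ Finset.range L, opNormOne (W ℓ)) * (A ^ L *ᵥ fun _ => ε) u :=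
        Finset.sum_le_sum fun u _ => hrows u
    _ = (∏ ℓ ∈ Finset.range L, opNormOne (W ℓ)) * ε * ∑ u, ∑ v, (A ^ L) u v := by
        simp only [mulVec, dotProduct, Finset.mul_sum]
        exact Finset.sum_congr rfl fun u _ => Finset.sum_congr rfl fun v _ => by ring

/-- Theorem 1 (ℓ¹ part, feature attacks on GCNs): for a symmetric nonnegative `Ã`, if
every row of the feature perturbation has `ℓ¹` norm at most `ε`, then the total `ℓ¹`
deviation of the output of an `L`-layer GCN is at most
`(∏ ℓ, ‖W⁽ˡ⁾‖₁) · ε · ∑ u, ŵ_u`, where `ŵ_u = ∑ v, (Ã^L)_{u v}`. -/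
theorem gcn_feature_attack_l1_bound
    {n : ℕ} (L : ℕ) (d : ℕ → ℕ) (φ : ℕ → ℝ → ℝ)
    (A : Matrix (Fin n) (Fin n) ℝ) (hA : ∀ i j, 0 ≤ A i j) (hAsymm : A.IsSymm)
    (W : (ℓ : ℕ) → Matrix (Fin (d ℓ)) (Fin (d (ℓ + 1))) ℝ)
    (hφ : ∀ ℓ, LipschitzWith 1 (φ ℓ))
    (X X' : Matrix (Fin n) (Fin (d 0)) ℝ) (ε : ℝ)
    (hX : ∀ v : Fin n, l1Norm (X v - X' v) ≤ ε) :
    ∑ u : Fin n, l1Norm (gcn d φ A W X L u - gcn d φ A W X' L u) ≤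
      (∏ ℓ ∈ Finset.range L, opNormOne (W ℓ)) * ε *
        (∑ u : Fin n, ∑ v : Fin n, (A ^ L) u v) :=
  gcn_feature_attack_l1_bound_general L d φ A hA W hφ X X' ε hX
end

section
/- Consider an L-layer GCN as below, with each activation additionally satisfying φ^{(ℓ)}(0) = 0 and with every weight matrix satisfying ‖W^{(ℓ)}‖₂ ≥ 1. Let Ã, Ã' ∈ ℝ^{n×n} satisfy ‖Ã‖₂ ≤ 1, ‖Ã'‖₂ ≤ 1, and ‖Ã − Ã'‖₂ ≤ ε. Then for every X ∈ ℝ^{n×K}: ‖F_Ã(X) − F_{Ã'}(X)‖_F ≤ (∏_{ℓ=1}^{L} ‖W^{(ℓ)}‖₂) · ‖X‖_F · ε · (1 + L · ∏_{ℓ=1}^{L} ‖W^{(ℓ)}‖₂). -/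
open scoped BigOperators

/-- The Frobenius norm of a real matrix. -/
noncomputable def frob {n m : ℕ} (M : Matrix (Fin n) (Fin m) ℝ) : ℝ :=
  Real.sqrt (∑ i : Fin n, ∑ j : Fin m, (M i j) ^ 2)

/-- The spectral norm (operator norm induced by the Euclidean vector norm) of a real
matrix. -/
noncomputable def spec {n m : ℕ} (M : Matrix (Fin n) (Fin m) ℝ) : ℝ :=
  ‖LinearMap.toContinuousLinearMap (Matrix.toEuclideanLin M)‖

/-! The Frobenius norm is bounded by the spectral norm of a factor on either side
(`‖A M‖_F ≤ ‖A‖₂ ‖M‖_F` column by column, and the right-hand version by transposition), and an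
entrywise 1-Lipschitz activation does not increase Frobenius distances. Hence
`‖H⁽ˡ⁾‖_F ≤ (∏ ‖W‖₂) ‖X‖_F`, and the splitting
`Ã H W − Ã' H' W = (Ã − Ã') H W + Ã' (H − H') W` gives by induction
`‖H⁽ˡ⁾ − H'⁽ˡ⁾‖_F ≤ ℓ (∏ ‖W‖₂) ‖Ã − Ã'‖₂ ‖X‖_F`, which is below the stated bound as `∏ ‖W‖₂ ≥ 1`. -/

open Matrix WithLp

lemma frob_nonneg {n m : ℕ} (M : Matrix (Fin n) (Fin m) ℝ) : 0 ≤ frob M :=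
  Real.sqrt_nonneg _

lemma spec_nonneg {n m : ℕ} (M : Matrix (Fin n) (Fin m) ℝ) : 0 ≤ spec M :=
  norm_nonneg _

open scoped Matrix.Norms.Frobenius in
lemma frob_eq_frobenius_norm {n m : ℕ} (M : Matrix (Fin n) (Fin m) ℝ) : frob M = ‖M‖ := by
  rw [frobenius_norm_def, ← Real.sqrt_eq_rpow, frob]
  simp only [Real.rpow_two, Real.norm_eq_abs, sq_abs]

open scoped Matrix.Norms.Frobenius in
lemma frob_add_le {n m : ℕ} (M N : Matrix (Fin n) (Fin m) ℝ) :
    frob (M + N) ≤ frob M + frob N := by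
  simpa only [frob_eq_frobenius_norm] using norm_add_le M N

lemma frob_le_frob_of_abs_le {n m : ℕ} {M N : Matrix (Fin n) (Fin m) ℝ}
    (h : ∀ i j, |M i j| ≤ |N i j|) : frob M ≤ frob N :=
  Real.sqrt_le_sqrt <| Finset.sum_le_sum fun i _ => Finset.sum_le_sum fun j _ =>
    sq_le_sq.mpr (h i j)

lemma frob_map_sub_map_le {n m : ℕ} {f : ℝ → ℝ} (hf : LipschitzWith 1 f)
    (M N : Matrix (Fin n) (Fin m) ℝ) : frob (M.map f - N.map f) ≤ frob (M - N) :=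
  frob_le_frob_of_abs_le fun i j => by
    simpa [Real.dist_eq] using hf.dist_le_mul (M i j) (N i j)

lemma frob_map_le {n m : ℕ} {f : ℝ → ℝ} (hf : LipschitzWith 1 f) (hf0 : f 0 = 0)
    (M : Matrix (Fin n) (Fin m) ℝ) : frob (M.map f) ≤ frob M := by
  simpa [Matrix.map_zero f hf0] using frob_map_sub_map_le hf M 0

lemma frob_transpose {n m : ℕ} (M : Matrix (Fin n) (Fin m) ℝ) : frob Mᵀ = frob M := by
  rw [frob, frob, Finset.sum_comm]
  rfl

open scoped Matrix.Norms.L2Operator in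
lemma spec_transpose {n m : ℕ} (M : Matrix (Fin n) (Fin m) ℝ) : spec Mᵀ = spec M := by
  rw [← conjTranspose_eq_transpose_of_trivial]
  exact l2_opNorm_conjTranspose M

lemma frob_sq_eq_sum_norm_col_sq {n m : ℕ} (M : Matrix (Fin n) (Fin m) ℝ) :
    frob M ^ 2 = ∑ j, ‖toLp 2 (Mᵀ j)‖ ^ 2 := by
  rw [frob, Real.sq_sqrt (by positivity), Finset.sum_comm]
  simp only [EuclideanSpace.real_norm_sq_eq, transpose_apply]

lemma norm_toLp_mulVec_le {n m : ℕ} (A : Matrix (Fin n) (Fin m) ℝ) (x : Fin m → ℝ) :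
    ‖toLp 2 (A *ᵥ x)‖ ≤ spec A * ‖toLp 2 x‖ :=
  (LinearMap.toContinuousLinearMap (toEuclideanLin A)).le_opNorm (toLp 2 x)

lemma frob_mul_le_spec_mul_frob {n m k : ℕ} (A : Matrix (Fin n) (Fin m) ℝ)
    (M : Matrix (Fin m) (Fin k) ℝ) : frob (A * M) ≤ spec A * frob M := by
  have hcol : ∀ j, ‖toLp 2 ((A * M)ᵀ j)‖ ^ 2 ≤ spec A ^ 2 * ‖toLp 2 (Mᵀ j)‖ ^ 2 := by
    intro j
    have hAM : (A * M)ᵀ j = A *ᵥ Mᵀ j := by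
      ext i; simp [mul_apply, mulVec, dotProduct]
    rw [hAM, ← mul_pow]
    exact pow_le_pow_left₀ (norm_nonneg _) (norm_toLp_mulVec_le A _) 2
  refine (pow_le_pow_iff_left₀ (frob_nonneg _)
    (mul_nonneg (spec_nonneg A) (frob_nonneg M)) two_ne_zero).mp ?_
  rw [frob_sq_eq_sum_norm_col_sq, mul_pow, frob_sq_eq_sum_norm_col_sq, Finset.mul_sum]
  exact Finset.sum_le_sum fun j _ => hcol j

lemma frob_mul_le_frob_mul_spec {n m k : ℕ} (M : Matrix (Fin n) (Fin m) ℝ)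
    (B : Matrix (Fin m) (Fin k) ℝ) : frob (M * B) ≤ frob M * spec B := by
  rw [← frob_transpose, transpose_mul, ← frob_transpose M, ← spec_transpose B, mul_comm]
  exact frob_mul_le_spec_mul_frob _ _

lemma frob_mul_mul_le {n m k l : ℕ} (A : Matrix (Fin n) (Fin m) ℝ)
    (H : Matrix (Fin m) (Fin k) ℝ) (B : Matrix (Fin k) (Fin l) ℝ) : frob (A * H * B) ≤ spec A * frob H * spec B :=
  (frob_mul_le_frob_mul_spec _ _).trans <|
    mul_le_mul_of_nonneg_right (frob_mul_le_spec_mul_frob _ _) (spec_nonneg _)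

section GCN

variable {n : ℕ} {d : ℕ → ℕ} {φ : ℕ → ℝ → ℝ}
  {W : (ℓ : ℕ) → Matrix (Fin (d ℓ)) (Fin (d (ℓ + 1))) ℝ}

lemma frob_gcn_le (hφ : ∀ ℓ, LipschitzWith 1 (φ ℓ)) (hφ0 : ∀ ℓ, φ ℓ 0 = 0)
    {A : Matrix (Fin n) (Fin n) ℝ} (hA : spec A ≤ 1) (X : Matrix (Fin n) (Fin (d 0)) ℝ)
    (ℓ : ℕ) : frob (gcn d φ A W X ℓ) ≤ (∏ j ∈ Finset.range ℓ, spec (W j)) * frob X := by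
  induction ℓ with
  | zero => simp [gcn]
  | succ ℓ ih =>
    calc frob (gcn d φ A W X (ℓ + 1))
        ≤ frob (A * gcn d φ A W X ℓ * W ℓ) := frob_map_le (hφ _) (hφ0 _) _
      _ ≤ spec A * frob (gcn d φ A W X ℓ) * spec (W ℓ) := frob_mul_mul_le _ _ _
      _ ≤ 1 * ((∏ j ∈ Finset.range ℓ, spec (W j)) * frob X) * spec (W ℓ) := by
          gcongr
          exacts [spec_nonneg _, frob_nonneg _]
      _ = (∏ j ∈ Finset.range (ℓ + 1), spec (W j)) * frob X := by
          rw [Finset.prod_range_succ]; ring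

lemma frob_gcn_sub_gcn_le (hφ : ∀ ℓ, LipschitzWith 1 (φ ℓ)) (hφ0 : ∀ ℓ, φ ℓ 0 = 0)
    {A A' : Matrix (Fin n) (Fin n) ℝ} (hA : spec A ≤ 1) (hA' : spec A' ≤ 1)
    (X : Matrix (Fin n) (Fin (d 0)) ℝ) (ℓ : ℕ) :
    frob (gcn d φ A W X ℓ - gcn d φ A' W X ℓ) ≤
      ℓ * (∏ j ∈ Finset.range ℓ, spec (W j)) * spec (A - A') * frob X := by
  induction ℓ with
  | zero => simp [gcn, frob]
  | succ ℓ ih =>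
    set H := gcn d φ A W X ℓ
    set H' := gcn d φ A' W X ℓ
    set P := ∏ j ∈ Finset.range ℓ, spec (W j)
    have hsplit :
        A * H * W ℓ - A' * H' * W ℓ = (A - A') * H * W ℓ + A' * (H - H') * W ℓ := by
      simp only [Matrix.sub_mul, Matrix.mul_sub]
      abel
    calc frob (gcn d φ A W X (ℓ + 1) - gcn d φ A' W X (ℓ + 1))
        ≤ frob (A * H * W ℓ - A' * H' * W ℓ) := frob_map_sub_map_le (hφ _) _ _
      _ ≤ spec (A - A') * frob H * spec (W ℓ) + spec A' * frob (H - H') * spec (W ℓ) := by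
          rw [hsplit]
          exact (frob_add_le _ _).trans <|
            add_le_add (frob_mul_mul_le _ _ _) (frob_mul_mul_le _ _ _)
      _ ≤ spec (A - A') * (P * frob X) * spec (W ℓ)
            + 1 * (ℓ * P * spec (A - A') * frob X) * spec (W ℓ) := by
          gcongr
          exacts [spec_nonneg _, spec_nonneg _, frob_gcn_le hφ hφ0 hA X ℓ, spec_nonneg _,
            frob_nonneg _]
      _ = (ℓ + 1 : ℕ) * (P * spec (W ℓ)) * spec (A - A') * frob X := by
          push_cast; ring
      _ = _ := by rw [Finset.prod_range_succ]

end GCN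

/-- Lipschitz core of Theorem 2 (structural attacks on GCNs): for an `L`-layer GCN with
1-Lipschitz activations vanishing at `0`, weight matrices of spectral norm at least `1`,
and graph-shift matrices `Ã, Ã'` of spectral norm at most `1` with `‖Ã − Ã'‖₂ ≤ ε`,
`‖F_Ã(X) − F_{Ã'}(X)‖_F ≤ (∏ ℓ, ‖W⁽ˡ⁾‖₂) · ‖X‖_F · ε · (1 + L · ∏ ℓ, ‖W⁽ˡ⁾‖₂)`. -/
theorem gcn_structural_attack_bound
    {n : ℕ} (L : ℕ) (d : ℕ → ℕ) (φ : ℕ → ℝ → ℝ)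
    (W : (ℓ : ℕ) → Matrix (Fin (d ℓ)) (Fin (d (ℓ + 1))) ℝ)
    (hφ : ∀ ℓ, LipschitzWith 1 (φ ℓ)) (hφ0 : ∀ ℓ, φ ℓ 0 = 0)
    (hW : ∀ ℓ < L, 1 ≤ spec (W ℓ))
    (A A' : Matrix (Fin n) (Fin n) ℝ) (ε : ℝ)
    (hA : spec A ≤ 1) (hA' : spec A' ≤ 1) (hAA' : spec (A - A') ≤ ε)
    (X : Matrix (Fin n) (Fin (d 0)) ℝ) :
    frob (gcn d φ A W X L - gcn d φ A' W X L) ≤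
      (∏ ℓ ∈ Finset.range L, spec (W ℓ)) * frob X * ε *
        (1 + (L : ℝ) * ∏ ℓ ∈ Finset.range L, spec (W ℓ)) := by
  set P := ∏ ℓ ∈ Finset.range L, spec (W ℓ)
  have hP : 1 ≤ P := Finset.one_le_prod fun ℓ hℓ => hW ℓ (Finset.mem_range.mp hℓ)
  have hε : 0 ≤ ε := (spec_nonneg _).trans hAA'
  have hX := frob_nonneg X
  calc frob (gcn d φ A W X L - gcn d φ A' W X L)
      ≤ L * P * spec (A - A') * frob X := frob_gcn_sub_gcn_le hφ hφ0 hA hA' X L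
    _ ≤ L * P * ε * frob X := by gcongr
    _ ≤ L * P * ε * frob X * P := le_mul_of_one_le_right (by positivity) hP
    _ ≤ P * frob X * ε * (1 + L * P) := by
        nlinarith [mul_nonneg (mul_nonneg (zero_le_one.trans hP) hX) hε]
end
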